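/- arXiv:1807.10801 — 2 statements merged into one kernel-verified Lean document; each statement's English description precedes it below -/
import Mathlib

section
/- If a random variable p₁ has distribution function F with F'(p) ≥ d > 0 on an interval (α, α+γ), and a function h : (0,1) → ℝ satisfies h(p) ≥ C / d(p,α) on (α, α+γ) where d(p,α) is the Bernoulli KL divergence and C > 0, then E[h(p₁)] = ∫₀¹ h(p) dF(p) = ∞. -/
/-! On `(α, α + γ)` the Bernoulli divergence is positive and, by `log x ≤ x - 1`, bounded by the
χ²-divergence `(p - α)² / (α (1 - α)) ≤ (p - α) / (α (1 - α))`. Hence `h p ≥ C α (1 - α) / (p - α)`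
there, which is not integrable at `α`; as the density of `p₁` is at least `d > 0` on that interval,
the expectation of `h(p₁)` is infinite. -/

open Real MeasureTheory

noncomputable def bernoulliKL (p α : ℝ) : ℝ :=
  p * Real.log (p / α) + (1 - p) * Real.log ((1 - p) / (1 - α))

open Set ENNReal

lemma sub_lt_mul_log_div {x y : ℝ} (hx : 0 < x) (hy : 0 < y) (hxy : x ≠ y) :
    x - y < x * Real.log (x / y) := by
  have h := Real.log_lt_sub_one_of_pos (div_pos hy hx) (div_ne_one_of_ne hxy.symm)
  have hlog : Real.log (y / x) = -Real.log (x / y) := by rw [← Real.log_inv, inv_div]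
  have hxy' : x * (y / x - 1) = y - x := by field_simp
  rw [hlog] at h
  linarith [mul_lt_mul_of_pos_left h hx]

lemma bernoulliKL_pos {p α : ℝ} (hp : 0 < p) (hp1 : p < 1) (hα : 0 < α) (hα1 : α < 1)
    (hpα : p ≠ α) : 0 < bernoulliKL p α := by
  have h₀ := sub_lt_mul_log_div hp hα hpα
  have h₁ := sub_lt_mul_log_div (sub_pos.2 hp1) (sub_pos.2 hα1) (by contrapose! hpα; linarith)
  unfold bernoulliKL
  linarith

lemma bernoulliKL_le_sq_div {p α : ℝ} (hp : 0 < p) (hp1 : p < 1) (hα : 0 < α) (hα1 : α < 1) :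
    bernoulliKL p α ≤ (p - α) ^ 2 / (α * (1 - α)) := by
  have h1p : 0 < 1 - p := sub_pos.2 hp1
  have h1α : 0 < 1 - α := sub_pos.2 hα1
  have h₀ : p * Real.log (p / α) ≤ p * (p / α - 1) :=
    mul_le_mul_of_nonneg_left (Real.log_le_sub_one_of_pos (by positivity)) hp.le
  have h₁ : (1 - p) * Real.log ((1 - p) / (1 - α)) ≤ (1 - p) * ((1 - p) / (1 - α) - 1) :=
    mul_le_mul_of_nonneg_left (Real.log_le_sub_one_of_pos (by positivity)) h1p.le
  have hχ : p * (p / α - 1) + (1 - p) * ((1 - p) / (1 - α) - 1)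
      = (p - α) ^ 2 / (α * (1 - α)) := by
    field_simp
    ring
  unfold bernoulliKL
  linarith

lemma lintegral_Ioo_inv_sub_eq_top {a b : ℝ} (hab : a < b) :
    ∫⁻ x in Ioo a b, ENNReal.ofReal (x - a)⁻¹ = ⊤ := by
  by_contra hfin
  have hint : IntegrableOn (fun x => (x - a)⁻¹) (Ioo a b) :=
    (lintegral_ofReal_ne_top_iff_integrable (by fun_prop)
      (ae_restrict_of_forall_mem measurableSet_Ioo fun x hx => (inv_pos.2 (sub_pos.2 hx.1)).le)).1
      hfin
  rw [← intervalIntegrable_iff_integrableOn_Ioo_of_le hab.le, intervalIntegrable_sub_inv_iff]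
    at hint
  rcases hint with hab' | ha
  · exact hab.ne hab'
  · exact ha left_mem_uIcc

lemma lintegral_Ioo_ofReal_div_bernoulliKL_eq_top {α b C : ℝ} (hα : 0 < α) (hαb : α < b)
    (hb : b ≤ 1) (hC : 0 < C) :
    ∫⁻ p in Ioo α b, ENNReal.ofReal (C / bernoulliKL p α) = ⊤ := by
  have hα1 : α < 1 := hαb.trans_le hb
  set K := C * (α * (1 - α))
  have hK : 0 < K := mul_pos hC (mul_pos hα (sub_pos.2 hα1))
  have hlower : ∀ p ∈ Ioo α b, K * (p - α)⁻¹ ≤ C / bernoulliKL p α := by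
    rintro p ⟨hαp, hpb⟩
    have hp1 : p < 1 := hpb.trans_le hb
    have hpα : 0 < p - α := sub_pos.2 hαp
    -- `(p - α)² ≤ p - α` because `0 < p - α < 1`
    have hKL : bernoulliKL p α ≤ (p - α) / (α * (1 - α)) :=
      (bernoulliKL_le_sq_div (hα.trans hαp) hp1 hα hα1).trans <| by
        gcongr
        nlinarith
    calc K * (p - α)⁻¹ = C / ((p - α) / (α * (1 - α))) := by
          rw [div_div_eq_mul_div, div_eq_mul_inv]
      _ ≤ C / bernoulliKL p α :=
          div_le_div_of_nonneg_left hC.le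
            (bernoulliKL_pos (hα.trans hαp) hp1 hα hα1 hαp.ne') hKL
  refine eq_top_iff.2 ?_
  calc ⊤ = ENNReal.ofReal K * ∫⁻ p in Ioo α b, ENNReal.ofReal (p - α)⁻¹ := by
        rw [lintegral_Ioo_inv_sub_eq_top hαb, ENNReal.mul_top (by simpa using hK)]
    _ = ∫⁻ p in Ioo α b, ENNReal.ofReal (K * (p - α)⁻¹) := by
        rw [← lintegral_const_mul' _ _ ofReal_ne_top]
        simp_rw [ENNReal.ofReal_mul hK.le]
    _ ≤ _ := setLIntegral_mono' measurableSet_Ioo fun p hp => ENNReal.ofReal_le_ofReal (hlower p hp)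

lemma smul_restrict_le_withDensity {X : Type*} [MeasurableSpace X] {μ : Measure X} {s t : Set X}
    (hs : MeasurableSet s) (hst : s ⊆ t) {f : X → ℝ≥0∞} {c : ℝ≥0∞} (hf : ∀ x ∈ s, c ≤ f x) :
    c • μ.restrict s ≤ (μ.restrict t).withDensity f :=
  calc c • μ.restrict s = (μ.restrict s).withDensity fun _ => c := (withDensity_const c).symm
    _ ≤ (μ.restrict s).withDensity f := withDensity_mono ((ae_restrict_iff' hs).2 (ae_of_all _ hf))
    _ = ((μ.restrict t).withDensity f).restrict s := by
        rw [restrict_withDensity hs, Measure.restrict_restrict_of_subset hst]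
    _ ≤ (μ.restrict t).withDensity f := Measure.restrict_le_self

theorem stmt2_general (α γ d C : ℝ) (hα : 0 < α) (hγ : 0 < γ) (hαγ : α + γ < 1)
    (hd : 0 < d) (hC : 0 < C)
    (f : ℝ → ℝ) (hf : ∀ p ∈ Set.Ioo α (α + γ), d ≤ f p)
    (μ : Measure ℝ)
    (hμ : μ = (volume.restrict (Set.Icc (0:ℝ) 1)).withDensity
      (fun p => ENNReal.ofReal (f p)))
    (h : ℝ → ℝ)
    (hhC : ∀ p ∈ Set.Ioo α (α + γ), C / bernoulliKL p α ≤ h p) :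
    ∫⁻ p, ENNReal.ofReal (h p) ∂μ = ⊤ := by
  set I := Ioo α (α + γ)
  have hI : I ⊆ Icc 0 1 := fun p hp => ⟨by linarith [hp.1], by linarith [hp.2]⟩
  have hμI : ENNReal.ofReal d • volume.restrict I ≤ μ :=
    hμ ▸ smul_restrict_le_withDensity measurableSet_Ioo hI
      fun p hp => ENNReal.ofReal_le_ofReal (hf p hp)
  refine eq_top_iff.2 ?_
  calc ⊤ = ENNReal.ofReal d * ∫⁻ p in I, ENNReal.ofReal (C / bernoulliKL p α) := by
        rw [lintegral_Ioo_ofReal_div_bernoulliKL_eq_top hα (by linarith) hαγ.le hC,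
          ENNReal.mul_top (by simpa using hd)]
    _ ≤ ENNReal.ofReal d * ∫⁻ p in I, ENNReal.ofReal (h p) :=
        mul_le_mul_right
          (setLIntegral_mono' measurableSet_Ioo fun p hp => ENNReal.ofReal_le_ofReal (hhC p hp)) _
    _ = ∫⁻ p, ENNReal.ofReal (h p) ∂(ENNReal.ofReal d • volume.restrict I) := by
        rw [lintegral_smul_measure, smul_eq_mul]
    _ ≤ ∫⁻ p, ENNReal.ofReal (h p) ∂μ := lintegral_mono' hμI le_rfl

theorem stmt2 (α γ d C : ℝ) (hα : 0 < α) (hγ : 0 < γ) (hαγ : α + γ < 1)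
    (hd : 0 < d) (hC : 0 < C)
    (f : ℝ → ℝ) (hf : ∀ p ∈ Set.Ioo α (α + γ), d ≤ f p)
    (μ : Measure ℝ) [IsProbabilityMeasure μ]
    (hμ : μ = (volume.restrict (Set.Icc (0:ℝ) 1)).withDensity
      (fun p => ENNReal.ofReal (f p)))
    (h : ℝ → ℝ) (hh : ∀ p, 0 ≤ h p)
    (hhC : ∀ p ∈ Set.Ioo α (α + γ), C / bernoulliKL p α ≤ h p) :
    ∫⁻ p, ENNReal.ofReal (h p) ∂μ = ⊤ :=
  stmt2_general α γ d C hα hγ hαγ hd hC f hf μ hμ h hhC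
end

section
/- The two-sided Clopper–Pearson confidence interval with coverage probability 1 − ρₙ based on n Monte Carlo simulations has length at most 2·(2n)^{−1/2}·(−log ρₙ)^{1/2}. -/
/-!
Hoeffding's lemma for a single Bernoulli(p) variable, `1 - p + p eᵗ ≤ exp (p t + t² / 8)`, gives
by the binomial theorem a sub-Gaussian bound on the moment generating function of Binomial(n, p),
and Chernoff's method with parameter `t = 4 (x - p)` then bounds every binomial tail beyond `n x`
by `exp (-2 n (x - p)²)`. The Clopper–Pearson limits make such tails equal to `ρ`, so each limit
lies within `√(-log ρ / (2 n))` of `S / n`.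
-/

open Real

/-- P(X ≤ S) for X ~ Binomial(n,p). -/
noncomputable def binomCdf (n : ℕ) (p : ℝ) (S : ℕ) : ℝ :=
  ∑ k ∈ Finset.range (S + 1), (n.choose k : ℝ) * p ^ k * (1 - p) ^ (n - k)

open MeasureTheory ProbabilityTheory Finset

lemma one_sub_add_mul_exp_le {p : ℝ} (hp0 : 0 ≤ p) (hp1 : p ≤ 1) (t : ℝ) :
    1 - p + p * exp t ≤ exp (p * t + t ^ 2 / 8) := by
  set μ : Measure ℝ := Ber((1 : ℝ), 0, ⟨p, hp0, hp1⟩)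
  have hsupp : ∀ᵐ x ∂μ, id x ∈ Set.Icc (0 : ℝ) 1 := by
    rw [ae_iff]
    exact bernoulliMeasure_apply_of_notMem_of_notMem _ measurableSet_Icc.compl (by simp) (by simp)
  have hmgf : p * exp (t * (1 - p)) + (1 - p) * exp (-(t * p)) ≤ exp (t ^ 2 / 8) := by
    convert (hasSubgaussianMGF_of_mem_Icc aemeasurable_id hsupp).mgf_le t using 1
    · simp [mgf, μ, integral_bernoulliMeasure]
    · norm_num; ring
  have h1 : exp (p * t) * exp (t * (1 - p)) = exp t := by rw [← exp_add]; ring_nf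
  have h0 : exp (p * t) * exp (-(t * p)) = 1 := by rw [← exp_add, ← exp_zero]; ring_nf
  calc 1 - p + p * exp t = exp (p * t) * (p * exp (t * (1 - p)) + (1 - p) * exp (-(t * p))) := by
        linear_combination (-p) * h1 - (1 - p) * h0
    _ ≤ exp (p * t) * exp (t ^ 2 / 8) := by gcongr
    _ = exp (p * t + t ^ 2 / 8) := (exp_add _ _).symm

lemma sum_choose_mul_pow_mul_pow (n : ℕ) (x y : ℝ) :
    ∑ k ∈ range (n + 1), (n.choose k : ℝ) * x ^ k * y ^ (n - k) = (x + y) ^ n := by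
  rw [add_pow]
  exact sum_congr rfl fun k _ => by ring

section Binomial

variable {n : ℕ} {p : ℝ}

lemma sum_binom_mul_exp_le (hp0 : 0 ≤ p) (hp1 : p ≤ 1) (t : ℝ) :
    ∑ k ∈ range (n + 1), (n.choose k : ℝ) * p ^ k * (1 - p) ^ (n - k) * exp (t * k) ≤
      exp (n * (p * t + t ^ 2 / 8)) := by
  calc ∑ k ∈ range (n + 1), (n.choose k : ℝ) * p ^ k * (1 - p) ^ (n - k) * exp (t * k)
      = ∑ k ∈ range (n + 1), (n.choose k : ℝ) * (p * exp t) ^ k * (1 - p) ^ (n - k) := by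
        refine sum_congr rfl fun k _ => ?_
        rw [mul_comm t, exp_nat_mul]; ring
    _ = (1 - p + p * exp t) ^ n := by rw [sum_choose_mul_pow_mul_pow, add_comm]
    _ ≤ exp (p * t + t ^ 2 / 8) ^ n := by
        refine pow_le_pow_left₀ ?_ (one_sub_add_mul_exp_le hp0 hp1 t) n
        exact add_nonneg (by linarith) (by positivity)
    _ = exp (n * (p * t + t ^ 2 / 8)) := (exp_nat_mul _ _).symm

/-- Hoeffding's inequality for Binomial(n, p), for any set of outcomes on the far side of `n x`
from the mean `n p`. -/
lemma sum_binom_le_exp {s : Finset ℕ} (hs : s ⊆ range (n + 1)) (hp0 : 0 ≤ p) (hp1 : p ≤ 1)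
    {x : ℝ} (hx : ∀ k ∈ s, 0 ≤ (x - p) * (k - n * x)) :
    ∑ k ∈ s, (n.choose k : ℝ) * p ^ k * (1 - p) ^ (n - k) ≤ exp (-(2 * n * (x - p) ^ 2)) := by
  set t := 4 * (x - p) with ht
  calc ∑ k ∈ s, (n.choose k : ℝ) * p ^ k * (1 - p) ^ (n - k)
      ≤ ∑ k ∈ s, (n.choose k : ℝ) * p ^ k * (1 - p) ^ (n - k) * exp (t * (k - n * x)) := by
        refine sum_le_sum fun k hk => le_mul_of_one_le_right (by positivity) (one_le_exp ?_)
        exact (mul_nonneg zero_le_four (hx k hk)).trans_eq (mul_assoc _ _ _).symm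
    _ ≤ ∑ k ∈ range (n + 1), (n.choose k : ℝ) * p ^ k * (1 - p) ^ (n - k) * exp (t * (k - n * x)) :=
        sum_le_sum_of_subset_of_nonneg hs fun k _ _ => by
          have : 0 ≤ 1 - p := by linarith
          positivity
    _ = exp (-(t * (n * x))) *
          ∑ k ∈ range (n + 1), (n.choose k : ℝ) * p ^ k * (1 - p) ^ (n - k) * exp (t * k) := by
        rw [mul_sum]
        refine sum_congr rfl fun k _ => ?_
        rw [mul_sub, exp_sub, div_eq_mul_inv, ← exp_neg]; ring
    _ ≤ exp (-(t * (n * x))) * exp (n * (p * t + t ^ 2 / 8)) := by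
        gcongr; exact sum_binom_mul_exp_le hp0 hp1 t
    _ = exp (-(2 * n * (x - p) ^ 2)) := by rw [← exp_add, ht]; ring_nf

lemma binomCdf_le_exp {S : ℕ} (hS : S ≤ n) (hp0 : 0 ≤ p) (hp1 : p ≤ 1) {x : ℝ}
    (hSx : S ≤ n * x) (hxp : x ≤ p) :
    binomCdf n p S ≤ exp (-(2 * n * (x - p) ^ 2)) := by
  refine sum_binom_le_exp (range_subset_range.2 (by omega)) hp0 hp1 fun k hk => ?_
  have hkS : (k : ℝ) ≤ S := by exact_mod_cast Nat.lt_succ_iff.1 (mem_range.1 hk)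
  exact mul_nonneg_of_nonpos_of_nonpos (by linarith) (by linarith)

lemma one_sub_binomCdf_eq {S : ℕ} (hS : S ≤ n) :
    1 - binomCdf n p S = ∑ k ∈ Ico (S + 1) (n + 1), (n.choose k : ℝ) * p ^ k * (1 - p) ^ (n - k) := by
  have htotal : ∑ k ∈ range (n + 1), (n.choose k : ℝ) * p ^ k * (1 - p) ^ (n - k) = 1 := by
    rw [sum_choose_mul_pow_mul_pow, add_sub_cancel, one_pow]
  rw [range_eq_Ico, ← sum_Ico_consecutive _ (Nat.zero_le (S + 1)) (by omega : S + 1 ≤ n + 1)]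
    at htotal
  rw [binomCdf, range_eq_Ico]
  linarith

lemma one_sub_binomCdf_pred_le_exp {S : ℕ} (hS0 : 0 < S) (hS : S ≤ n) (hp0 : 0 ≤ p)
    (hp1 : p ≤ 1) {x : ℝ} (hpx : p ≤ x) (hxS : n * x ≤ S) :
    1 - binomCdf n p (S - 1) ≤ exp (-(2 * n * (x - p) ^ 2)) := by
  rw [one_sub_binomCdf_eq (by omega), Nat.sub_add_cancel hS0]
  refine sum_binom_le_exp (fun k hk => mem_range.2 (mem_Ico.1 hk).2) hp0 hp1 fun k hk => ?_
  have hkS : (S : ℝ) ≤ k := by exact_mod_cast (mem_Ico.1 hk).1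
  exact mul_nonneg (by linarith) (by linarith)

end Binomial

lemma abs_le_sqrt_of_le_exp {ρ c d : ℝ} (hρ : 0 < ρ) (hc : 0 < c) (h : ρ ≤ exp (-(c * d ^ 2))) :
    |d| ≤ √(-log ρ / c) := by
  refine abs_le_sqrt ((le_div_iff₀ hc).2 ?_)
  have := (log_le_iff_le_exp hρ).2 h
  linarith

section ClopperPearson

variable {n S : ℕ} {ρ : ℝ}

lemma clopperPearson_upper_sub_le (hn : 0 < n) (hS : S ≤ n) (hρ : 0 < ρ) {pu : ℝ}
    (hpu1 : pu ≤ 1) (hpu : (S < n → binomCdf n pu S = ρ) ∧ (S = n → pu = 1)) :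
    pu - S / n ≤ √(-log ρ / (2 * n)) := by
  have hn' : (0 : ℝ) < n := by exact_mod_cast hn
  rcases hS.lt_or_eq with hlt | rfl
  · rcases le_or_gt pu (S / n) with hle | hgt
    · exact (sub_nonpos.2 hle).trans (sqrt_nonneg _)
    have hS0 : (0 : ℝ) ≤ S / n := by positivity
    have hbound := binomCdf_le_exp hlt.le (by linarith) hpu1 (x := S / n)
      (by rw [mul_div_cancel₀ _ hn'.ne']) hgt.le
    rw [hpu.1 hlt] at hbound
    have hdev := abs_le_sqrt_of_le_exp hρ (by positivity) hbound
    rw [abs_sub_comm] at hdev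
    exact (le_abs_self _).trans hdev
  · rw [hpu.2 rfl, div_self hn'.ne', sub_self]
    exact sqrt_nonneg _

lemma clopperPearson_sub_lower_le (hn : 0 < n) (hS : S ≤ n) (hρ : 0 < ρ) {pl : ℝ}
    (hpl0 : 0 ≤ pl) (hpl : (0 < S → 1 - binomCdf n pl (S - 1) = ρ) ∧ (S = 0 → pl = 0)) :
    S / n - pl ≤ √(-log ρ / (2 * n)) := by
  have hn' : (0 : ℝ) < n := by exact_mod_cast hn
  rcases Nat.eq_zero_or_pos S with rfl | hpos
  · rw [hpl.2 rfl, Nat.cast_zero, zero_div, sub_zero]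
    exact sqrt_nonneg _
  · rcases le_or_gt (S / n : ℝ) pl with hle | hlt
    · exact (sub_nonpos.2 hle).trans (sqrt_nonneg _)
    have hS1 : (S / n : ℝ) ≤ 1 := div_le_one_of_le₀ (by exact_mod_cast hS) hn'.le
    have hbound := one_sub_binomCdf_pred_le_exp hpos hS hpl0 (by linarith) (x := S / n) hlt.le
      (by rw [mul_div_cancel₀ _ hn'.ne'])
    rw [hpl.1 hpos] at hbound
    exact (le_abs_self _).trans (abs_le_sqrt_of_le_exp hρ (by positivity) hbound)

end ClopperPearson

lemma sqrt_div_eq_rpow_mul_sqrt (a : ℝ) {b : ℝ} (hb : 0 ≤ b) :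
    √(a / b) = b ^ (-(1 : ℝ) / 2) * √a := by
  rw [sqrt_div' a hb, sqrt_eq_rpow b, neg_div, rpow_neg hb, div_eq_mul_inv, mul_comm]

theorem stmt5_general (n S : ℕ) (hn : 1 ≤ n) (hS : S ≤ n) (ρ : ℝ) (hρ0 : 0 < ρ)
    (pl pu : ℝ) (hpl0 : 0 ≤ pl) (hpu1 : pu ≤ 1)
    -- upper limit: solves P(X ≤ S | p = pu) = ρ, or pu = 1 if S = n
    (hpu : (S < n → binomCdf n pu S = ρ) ∧ (S = n → pu = 1))
    -- lower limit: solves P(X ≥ S | p = pl) = ρ, or pl = 0 if S = 0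
    (hplow : (0 < S → 1 - binomCdf n pl (S - 1) = ρ) ∧ (S = 0 → pl = 0)) :
    pu - pl ≤ 2 * (2 * n : ℝ) ^ (-(1:ℝ)/2) * Real.sqrt (-Real.log ρ) := by
  have hupper := clopperPearson_upper_sub_le hn hS hρ0 hpu1 hpu
  have hlower := clopperPearson_sub_lower_le hn hS hρ0 hpl0 hplow
  rw [mul_assoc, ← sqrt_div_eq_rpow_mul_sqrt _ (by positivity)]
  linarith

/-- Length of the two-sided Clopper–Pearson interval with coverage 1 - ρ. -/
theorem stmt5 (n S : ℕ) (hn : 1 ≤ n) (hS : S ≤ n) (ρ : ℝ) (hρ0 : 0 < ρ) (hρ1 : ρ < 1)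
    (pl pu : ℝ) (hpl0 : 0 ≤ pl) (hpu1 : pu ≤ 1) (hlu : pl ≤ pu)
    -- upper limit: solves P(X ≤ S | p = pu) = ρ, or pu = 1 if S = n
    (hpu : (S < n → binomCdf n pu S = ρ) ∧ (S = n → pu = 1))
    -- lower limit: solves P(X ≥ S | p = pl) = ρ, or pl = 0 if S = 0
    (hplow : (0 < S → 1 - binomCdf n pl (S - 1) = ρ) ∧ (S = 0 → pl = 0)) :
    pu - pl ≤ 2 * (2 * n : ℝ) ^ (-(1:ℝ)/2) * Real.sqrt (-Real.log ρ) :=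
  stmt5_general n S hn hS ρ hρ0 pl pu hpl0 hpu1 hpu hplow
end
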